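/- arXiv:2212.07002 — 6 statements merged into one kernel-verified Lean document; each statement's English description precedes it below -/
import Mathlib

section
/- Let S be a feasible schedule in which all jobs have release time 1 and due date T, and let i, j ∈ J(S) be two scheduled jobs with π_S(i) < π_S(j) and e_i > e_j. Then the schedule S′ obtained from S by swapping the two jobs (i.e., J(S′) = J(S), π_{S′}(i) = π_S(j), π_{S′}(j) = π_S(i), and π_{S′} = π_S on all other jobs) is also feasible. -/
/-!
Swapping the slots of `i` and `j` is the same as keeping the slots and swapping the
energy requirements, so it changes the energy available before `t` by
`[σ i < t] (e i - e j) + [σ j < t] (e j - e i)`. When `σ i < σ j` and `e j < e i` this is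
never negative, and just before `σ j` it is exactly `e i - e j`, which is what the job
moved to `σ j` needs on top of what `j` needed there.
-/

/-- The energy available immediately before slot `t`:
the total energy harvestable at slots `1,…,t-1`, minus, for each job `i ∈ J`
scheduled at a slot `σ i < t`, its energy requirement `e i` plus the harvestable
energy `h (σ i)` lost at its execution slot. -/
def energyBefore (e h : ℕ → ℤ) (J : Finset ℕ) (σ : ℕ → ℕ) (t : ℕ) : ℤ :=
  (∑ τ ∈ Finset.Icc 1 (t - 1), h τ) -
    ∑ i ∈ J.filter (fun i => σ i < t), (e i + h (σ i))

/-- A schedule `(J, σ)` is feasible for an EAS instance with `n` jobs, `T` slots,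
release times `r`, due dates `d`, energy requirements `e` and harvest profile `h`. -/
def IsFeasible (n T : ℕ) (r d : ℕ → ℕ) (e h : ℕ → ℤ)
    (J : Finset ℕ) (σ : ℕ → ℕ) : Prop :=
  J ⊆ Finset.Icc 1 n ∧ Set.InjOn σ ↑J ∧
    ∀ i ∈ J, 1 ≤ σ i ∧ σ i ≤ T ∧ r i ≤ σ i ∧ σ i ≤ d i ∧
      e i ≤ energyBefore e h J σ (σ i)

theorem Finset.swap_apply_mem_iff {α : Type*} [DecidableEq α] {s : Finset α} {a b : α}
    (ha : a ∈ s) (hb : b ∈ s) (x : α) : Equiv.swap a b x ∈ s ↔ x ∈ s := by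
  rw [Equiv.swap_apply_def]
  split_ifs <;> simp_all

section Schedule

variable {n T : ℕ} {r d : ℕ → ℕ} {e h : ℕ → ℤ} {J : Finset ℕ} {σ : ℕ → ℕ} {i j : ℕ}

theorem energyBefore_comp_perm (p : Equiv.Perm ℕ) (hp : ∀ m, p m ∈ J ↔ m ∈ J) (t : ℕ) :
    energyBefore e h J (σ ∘ p) t = energyBefore (e ∘ p.symm) h J σ t := by
  unfold energyBefore
  congr 1
  refine Finset.sum_equiv p (fun m => by simp [hp]) fun m _ => ?_
  simp

theorem IsFeasible.comp_perm (p : Equiv.Perm ℕ) (hp : ∀ m, p m ∈ J ↔ m ∈ J)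
    (hfeas : IsFeasible n T (r ∘ p.symm) (d ∘ p.symm) (e ∘ p.symm) h J σ) :
    IsFeasible n T r d e h J (σ ∘ p) := by
  obtain ⟨hsub, hinj, hslots⟩ := hfeas
  refine ⟨hsub, hinj.comp p.injective.injOn fun m hm => (hp m).2 hm, fun k hk => ?_⟩
  have hpk := hslots (p k) ((hp k).2 hk)
  simp only [Function.comp_apply, Equiv.symm_apply_apply] at hpk
  rw [Function.comp_apply, energyBefore_comp_perm p hp]
  exact hpk

theorem energyBefore_comp_swap (hi : i ∈ J) (hj : j ∈ J) (hij : i ≠ j) (t : ℕ) :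
    energyBefore (e ∘ Equiv.swap i j) h J σ t = energyBefore e h J σ t +
      ((if σ i < t then e i - e j else 0) + (if σ j < t then e j - e i else 0)) := by
  have hdiff : (∑ m ∈ J, if σ m < t then e m + h (σ m) else 0) -
      (∑ m ∈ J, if σ m < t then e (Equiv.swap i j m) + h (σ m) else 0) =
      (if σ i < t then e i - e j else 0) + (if σ j < t then e j - e i else 0) := by
    rw [← Finset.sum_sub_distrib, Finset.sum_eq_add_of_mem i j hi hj hij]
    · simp only [Equiv.swap_apply_left, Equiv.swap_apply_right]
      split_ifs <;> ring
    · rintro m - ⟨hmi, hmj⟩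
      simp [Equiv.swap_apply_of_ne_of_ne hmi hmj]
  unfold energyBefore
  rw [Finset.sum_filter, Finset.sum_filter]
  simp only [Function.comp_apply]
  linarith

theorem energyBefore_le_comp_swap (hi : i ∈ J) (hj : j ∈ J) (hle : σ i ≤ σ j) (hee : e j ≤ e i) (t : ℕ) :
    energyBefore e h J σ t ≤ energyBefore (e ∘ Equiv.swap i j) h J σ t := by
  rcases eq_or_ne i j with rfl | hij
  · simp
  rw [energyBefore_comp_swap hi hj hij]
  split_ifs <;> omega

theorem le_energyBefore_comp_swap (hi : i ∈ J) (hj : j ∈ J) (hlt : σ i < σ j) (hee : e j ≤ e i)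
    (henergy : ∀ k ∈ J, e k ≤ energyBefore e h J σ (σ k)) (k : ℕ) (hk : k ∈ J) :
    (e ∘ Equiv.swap i j) k ≤ energyBefore (e ∘ Equiv.swap i j) h J σ (σ k) := by
  rw [Function.comp_apply, Equiv.swap_apply_def]
  split_ifs with hki hkj
  · subst hki
    exact hee.trans ((henergy k hk).trans (energyBefore_le_comp_swap hi hj hlt.le hee _))
  · subst hkj
    have hij : i ≠ k := fun hik => hlt.ne (congrArg σ hik)
    rw [energyBefore_comp_swap hi hj hij, if_pos hlt, if_neg (lt_irrefl _)]
    linarith [henergy k hk]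
  · exact (henergy k hk).trans (energyBefore_le_comp_swap hi hj hlt.le hee _)

end Schedule

theorem swap_feasible_general (n T : ℕ) (e h : ℕ → ℤ)
    (J : Finset ℕ) (σ : ℕ → ℕ)
    (hfeas : IsFeasible n T (fun _ => 1) (fun _ => T) e h J σ)
    (i j : ℕ) (hi : i ∈ J) (hj : j ∈ J)
    (hlt : σ i < σ j) (hee : e j < e i) :
    IsFeasible n T (fun _ => 1) (fun _ => T) e h J
      (Function.update (Function.update σ i (σ j)) j (σ i)) := by
  have hij : i ≠ j := fun hij => hlt.ne (congrArg σ hij)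
  rw [Function.update_comm hij, ← Equiv.comp_swap_eq_update]
  refine IsFeasible.comp_perm _ (Finset.swap_apply_mem_iff hi hj) ?_
  rw [Equiv.symm_swap]
  obtain ⟨hsub, hinj, hslots⟩ := hfeas
  have henergy := le_energyBefore_comp_swap hi hj hlt hee.le fun k hk => (hslots k hk).2.2.2.2
  refine ⟨hsub, hinj, fun k hk => ?_⟩
  obtain ⟨h1, hT, -, -, -⟩ := hslots k hk
  exact ⟨h1, hT, h1, hT, henergy k hk⟩

/-- If `S = (J, σ)` is feasible (all jobs released at slot 1 with
due date `T`), `i, j ∈ J`, `σ i < σ j` and `e i > e j`, then the schedule obtained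
by swapping the execution slots of `i` and `j` is also feasible. -/
theorem swap_feasible (n T : ℕ) (e h : ℕ → ℤ)
    (he : ∀ i, 0 ≤ e i) (hh : ∀ t, 0 ≤ h t)
    (J : Finset ℕ) (σ : ℕ → ℕ)
    (hfeas : IsFeasible n T (fun _ => 1) (fun _ => T) e h J σ)
    (i j : ℕ) (hi : i ∈ J) (hj : j ∈ J)
    (hlt : σ i < σ j) (hee : e j < e i) :
    IsFeasible n T (fun _ => 1) (fun _ => T) e h J
      (Function.update (Function.update σ i (σ j)) j (σ i)) :=
  swap_feasible_general n T e h J σ hfeas i j hi hj hlt hee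
end

section
/- Suppose all jobs have identical release times r_i = 1 and due dates d_i = T, and the jobs are indexed so that e_1 ≤ e_2 ≤ … ≤ e_n. If there exists a feasible schedule scheduling exactly m jobs, then there exists a feasible schedule S with J(S) = {1, 2, …, m}, i.e., a feasible schedule that schedules exactly the prefix J_1, …, J_m of the jobs. In particular, there exists an optimal (maximum-cardinality) feasible schedule that schedules a prefix of the sequence J_1, …, J_n. -/
open Finset

-- Enumerating `insert 0 J` with `Nat.nth` puts `0` at index `0`, so the element of `J` at
-- index `i` is at least `i`.
theorem Finset.exists_injOn_le_of_card_eq {J : Finset ℕ} (hJ : 0 ∉ J) {m : ℕ} (hcard : #J = m) :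
    ∃ f : ℕ → ℕ, Set.MapsTo f (Icc 1 m) J ∧ Set.InjOn f (Icc 1 m) ∧ ∀ i ∈ Icc 1 m, i ≤ f i := by
  set p : ℕ → Prop := (· ∈ insert 0 J)
  have hfin : (Set.ofPred p).Finite := (insert 0 J).finite_toSet
  have hlt : ∀ i ∈ Icc 1 m, i < #hfin.toFinset := fun i hi => by
    have : hfin.toFinset = insert 0 J := by ext; simp [p]
    rw [this, card_insert_of_notMem hJ, hcard]
    exact Nat.lt_succ_of_le (mem_Icc.1 hi).2
  have hle : ∀ i ∈ Icc 1 m, i ≤ Nat.nth p i := fun i hi => Nat.le_nth fun _ => hlt i hi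
  refine ⟨Nat.nth p, fun i hi => ?_, (Nat.nth_injOn hfin).mono fun i hi => hlt i hi, hle⟩
  have hpos : 0 < Nat.nth p i := (mem_Icc.1 hi).1.trans (hle i hi)
  exact (mem_insert.1 (Nat.nth_mem_of_lt_card hfin (hlt i hi))).resolve_left hpos.ne'

section Reassign

variable {e h : ℕ → ℤ} {J J' : Finset ℕ} {σ f : ℕ → ℕ}

theorem energyBefore_le_energyBefore_comp (hmaps : Set.MapsTo f J' J) (hinj : Set.InjOn f J')
    (hle : ∀ i ∈ J', e i ≤ e (f i)) (hnonneg : ∀ j ∈ J, 0 ≤ e j + h (σ j)) (t : ℕ) :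
    energyBefore e h J σ t ≤ energyBefore e h J' (σ ∘ f) t := by
  refine sub_le_sub_left ?_ _
  set A := J'.filter fun i => σ (f i) < t
  have hAJ' : A ⊆ J' := filter_subset _ _
  calc ∑ i ∈ A, (e i + h (σ (f i)))
      ≤ ∑ i ∈ A, (e (f i) + h (σ (f i))) :=
        sum_le_sum fun i hi => add_le_add_left (hle i (hAJ' hi)) _
    _ = ∑ j ∈ A.image f, (e j + h (σ j)) :=
        (sum_image (f := fun j => e j + h (σ j)) fun a ha b hb => hinj (hAJ' ha) (hAJ' hb)).symm
    _ ≤ ∑ j ∈ J.filter fun j => σ j < t, (e j + h (σ j)) := by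
        refine sum_le_sum_of_subset_of_nonneg ?_ fun j hj _ => hnonneg j (mem_filter.1 hj).1
        intro j hj
        obtain ⟨i, hi, rfl⟩ := mem_image.1 hj
        exact mem_filter.2 ⟨hmaps (hAJ' hi), (mem_filter.1 hi).2⟩

variable {n T : ℕ} {r d : ℕ → ℕ}

theorem IsFeasible.comp_of_injOn (hfeas : IsFeasible n T r d e h J σ) (hJ' : J' ⊆ Icc 1 n)
    (hmaps : Set.MapsTo f J' J) (hinj : Set.InjOn f J') (hle : ∀ i ∈ J', e i ≤ e (f i))
    (hr : ∀ i ∈ J', r i ≤ r (f i)) (hd : ∀ i ∈ J', d (f i) ≤ d i)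
    (hnonneg : ∀ j ∈ J, 0 ≤ e j + h (σ j)) :
    IsFeasible n T r d e h J' (σ ∘ f) := by
  obtain ⟨-, hσinj, hσ⟩ := hfeas
  refine ⟨hJ', hσinj.comp hinj hmaps, fun i hi => ?_⟩
  obtain ⟨h1, hT, hri, hdi, henergy⟩ := hσ (f i) (hmaps hi)
  exact ⟨h1, hT, (hr i hi).trans hri, hdi.trans (hd i hi), (hle i hi).trans <|
    henergy.trans (energyBefore_le_energyBefore_comp hmaps hinj hle hnonneg _)⟩

end Reassign

/-- With identical release times `1` and due dates `T`, and jobs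
indexed in non-decreasing order of energy requirement, if some feasible schedule
schedules exactly `m` jobs then the prefix `{1,…,m}` can be scheduled feasibly. -/
theorem prefix_schedulable (n T : ℕ) (e h : ℕ → ℤ)
    (he : ∀ i, 0 ≤ e i) (hh : ∀ t, 0 ≤ h t)
    (hmono : ∀ i j, 1 ≤ i → i ≤ j → j ≤ n → e i ≤ e j)
    (m : ℕ) (J : Finset ℕ) (σ : ℕ → ℕ)
    (hfeas : IsFeasible n T (fun _ => 1) (fun _ => T) e h J σ)
    (hcard : J.card = m) :
    ∃ σ' : ℕ → ℕ,
      IsFeasible n T (fun _ => 1) (fun _ => T) e h (Finset.Icc 1 m) σ' := by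
  have hJn : J ⊆ Icc 1 n := hfeas.1
  obtain ⟨f, hmaps, hinj, hle⟩ :=
    exists_injOn_le_of_card_eq (fun h0 => by simpa using hJn h0) hcard
  have hmn : m ≤ n := by simpa [hcard] using card_le_card hJn
  refine ⟨σ ∘ f, hfeas.comp_of_injOn (Icc_subset_Icc_right hmn) hmaps hinj
    (fun i hi => hmono i (f i) (mem_Icc.1 hi).1 (hle i hi) (mem_Icc.1 (hJn (hmaps hi))).2)
    (fun _ _ => le_rfl) (fun _ _ => le_rfl) fun j _ => add_nonneg (he j) (hh (σ j))⟩
end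

section
/- Suppose all jobs have identical release times r_i = 1 and due dates d_i = T. For every feasible schedule S there exists a feasible schedule S′ with J(S′) = J(S) in which the jobs are scheduled in non-decreasing order of their energy requirement, i.e., for all i, j ∈ J(S′), if π_{S′}(i) < π_{S′}(j) then e_i ≤ e_j. In particular, there exists an optimal (maximum-cardinality) feasible schedule whose jobs are scheduled in non-decreasing order of energy requirement. -/
open Finset

section Exchange

variable {ι M : Type*} [AddCommMonoid M] [PartialOrder M] [IsOrderedAddMonoid M]

theorem sum_le_sum_of_card_eq_of_forall_le (w : ι → M) {X Y : Finset ι} (hcard : #X = #Y)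
    (hle : ∀ x ∈ X, ∀ y ∈ Y, w x ≤ w y) : ∑ x ∈ X, w x ≤ ∑ y ∈ Y, w y := by
  let φ : X ≃ Y := equivOfCardEq hcard
  calc ∑ x ∈ X, w x = ∑ x : X, w x := (sum_coe_sort X w).symm
    _ ≤ ∑ x : X, w (φ x) := sum_le_sum fun x _ => hle x x.2 (φ x) (φ x).2
    _ = ∑ y : Y, w y := φ.sum_comp fun y => w y
    _ = ∑ y ∈ Y, w y := sum_coe_sort Y w

theorem sum_le_sum_of_card_eq_of_forall_sdiff_le [DecidableEq ι] (w : ι → M) {A B : Finset ι}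
    (hcard : #B = #A) (hle : ∀ b ∈ B \ A, ∀ a ∈ A \ B, w b ≤ w a) :
    ∑ x ∈ B, w x ≤ ∑ x ∈ A, w x := by
  rw [← sum_inter_add_sum_sdiff B A, ← sum_inter_add_sum_sdiff A B, inter_comm]
  exact add_le_add le_rfl (sum_le_sum_of_card_eq_of_forall_le w (card_sdiff_comm hcard) hle)

end Exchange

theorem exists_sorted_bijOn_of_card_eq {ι β γ : Type*} [DecidableEq ι] [LinearOrder β]
    [Nonempty β] [LinearOrder γ] (w : ι → γ) (J : Finset ι) :
    ∀ S : Finset β, #S = #J →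
      ∃ f : ι → β, Set.BijOn f J S ∧ ∀ i ∈ J, ∀ j ∈ J, f i < f j → w i ≤ w j := by
  induction J using Finset.induction_on_max_value w with
  | empty =>
    intro S hS
    exact ⟨fun _ => Classical.arbitrary β, by simp_all, by simp⟩
  | insert a J ha hmax ih =>
    intro S hS
    have hne : S.Nonempty := by rw [← card_pos, hS]; simp
    set s := S.max' hne
    obtain ⟨f, hbij, hsorted⟩ := ih (S.erase s) (by
      rw [card_erase_of_mem (max'_mem S hne), hS, card_insert_of_notMem ha]; simp)
    refine ⟨Function.update f a s, ?_, ?_⟩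
    · have hbij' : Set.BijOn (Function.update f a s) J (S.erase s) :=
        hbij.congr fun x hx =>
          (Function.update_of_ne (ne_of_mem_of_not_mem hx ha) _ _).symm
      rw [coe_insert, ← insert_erase (max'_mem S hne), coe_insert]
      simpa using hbij'.insert (a := a) (by simp)
    · have hlt_s : ∀ j ∈ J, f j < s := fun j hj =>
        have hj' := mem_erase.1 (hbij.mapsTo hj)
        hj'.1.lt_of_le (le_max' S _ hj'.2)
      intro i hi j hj hij
      rcases mem_insert.1 hi with rfl | hiJ <;> rcases mem_insert.1 hj with rfl | hjJ
      · exact le_rfl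
      · simp only [Function.update_self,
          Function.update_of_ne (ne_of_mem_of_not_mem hjJ ha)] at hij
        exact absurd (hlt_s j hjJ) hij.not_gt
      · exact hmax i hiJ
      · simp only [Function.update_of_ne (ne_of_mem_of_not_mem hiJ ha),
          Function.update_of_ne (ne_of_mem_of_not_mem hjJ ha)] at hij
        exact hsorted i hiJ j hjJ hij

theorem sum_filter_le_le_of_sorted {ι β M : Type*} [DecidableEq ι] [LinearOrder β]
    [AddCommMonoid M] [PartialOrder M] [IsOrderedAddMonoid M] (w : ι → M) {J : Finset ι}
    {σ τ : ι → β} (hσ : Set.InjOn σ J) (hτ : Set.InjOn τ J) (himage : J.image τ = J.image σ)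
    (hsorted : ∀ i ∈ J, ∀ j ∈ J, τ i < τ j → w i ≤ w j) (t : β) :
    ∑ j ∈ J with τ j ≤ t, w j ≤ ∑ j ∈ J with σ j ≤ t, w j := by
  have hcard : ∀ {ρ : ι → β}, Set.InjOn ρ J →
      #{j ∈ J | ρ j ≤ t} = #{s ∈ J.image ρ | s ≤ t} :=
    fun hρ => by rw [filter_image, card_image_of_injOn (hρ.mono (filter_subset _ _))]
  refine sum_le_sum_of_card_eq_of_forall_sdiff_le w (by rw [hcard hτ, hcard hσ, himage]) ?_
  intro b hb a ha
  simp only [mem_sdiff, mem_filter, not_and, not_le] at hb ha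
  exact hsorted b hb.1.1 a ha.1.1 (hb.1.2.trans_lt (ha.2 ha.1.1))

def idleHarvest (h : ℕ → ℤ) (S : Finset ℕ) (t : ℕ) : ℤ :=
  ∑ τ ∈ Icc 1 (t - 1), h τ - ∑ s ∈ S with s < t, h s

theorem le_energyBefore_iff {e h : ℕ → ℤ} {J : Finset ℕ} {σ : ℕ → ℕ} (hσ : Set.InjOn σ J)
    {i : ℕ} (hi : i ∈ J) :
    e i ≤ energyBefore e h J σ (σ i) ↔
      ∑ j ∈ J with σ j ≤ σ i, e j ≤ idleHarvest h (J.image σ) (σ i) := by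
  have hinsert : {j ∈ J | σ j ≤ σ i} = insert i {j ∈ J | σ j < σ i} := by
    ext j
    simp only [mem_filter, mem_insert]
    constructor
    · rintro ⟨hj, hle⟩
      rcases hle.lt_or_eq with hlt | heq
      exacts [Or.inr ⟨hj, hlt⟩, Or.inl (hσ hj hi heq)]
    · rintro (rfl | ⟨hj, hlt⟩)
      exacts [⟨hi, le_rfl⟩, ⟨hj, hlt.le⟩]
  have hbusy : ∑ s ∈ J.image σ with s < σ i, h s = ∑ j ∈ J with σ j < σ i, h (σ j) := by
    rw [filter_image, sum_image (hσ.mono (filter_subset _ _))]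
  rw [idleHarvest, hbusy, hinsert, sum_insert (by simp), energyBefore, sum_add_distrib]
  constructor <;> intro <;> linarith

theorem exists_sorted_rearrangement_general (n T : ℕ) (e h : ℕ → ℤ)
    (J : Finset ℕ) (σ : ℕ → ℕ)
    (hfeas : IsFeasible n T (fun _ => 1) (fun _ => T) e h J σ) :
    ∃ σ' : ℕ → ℕ,
      IsFeasible n T (fun _ => 1) (fun _ => T) e h J σ' ∧
        ∀ i ∈ J, ∀ j ∈ J, σ' i < σ' j → e i ≤ e j := by
  obtain ⟨hJ, hσ, hslot⟩ := hfeas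
  obtain ⟨τ, hτ, hsorted⟩ :=
    exists_sorted_bijOn_of_card_eq e J (J.image σ) (card_image_of_injOn hσ)
  have himage : J.image τ = J.image σ := by
    rw [← coe_inj, coe_image, hτ.image_eq]
  refine ⟨τ, ⟨hJ, hτ.injOn, fun i hi => ?_⟩, hsorted⟩
  obtain ⟨k, hk, hki⟩ := mem_image.1 (himage ▸ mem_image_of_mem τ hi)
  obtain ⟨h1, hT, -, -, henergy⟩ := hslot k hk
  rw [← hki]
  refine ⟨h1, hT, h1, hT, ?_⟩
  rw [le_energyBefore_iff hσ hk] at henergy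
  rw [hki, le_energyBefore_iff hτ.injOn hi, himage, ← hki]
  exact (sum_filter_le_le_of_sorted e hσ hτ.injOn himage hsorted _).trans henergy

/-- With identical release times `1` and due dates `T`, every
feasible schedule can be rearranged, on the same set of jobs, so that jobs are
executed in non-decreasing order of their energy requirement. -/
theorem exists_sorted_rearrangement (n T : ℕ) (e h : ℕ → ℤ)
    (he : ∀ i, 0 ≤ e i) (hh : ∀ t, 0 ≤ h t)
    (J : Finset ℕ) (σ : ℕ → ℕ)
    (hfeas : IsFeasible n T (fun _ => 1) (fun _ => T) e h J σ) :
    ∃ σ' : ℕ → ℕ,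
      IsFeasible n T (fun _ => 1) (fun _ => T) e h J σ' ∧
        ∀ i ∈ J, ∀ j ∈ J, σ' i < σ' j → e i ≤ e j :=
  exists_sorted_rearrangement_general n T e h J σ hfeas
end

section
/- Suppose all jobs have identical release times r_i = 1 and due dates d_i = T, the jobs are indexed so that e_1 ≤ … ≤ e_n, all energy requirements e_1, …, e_n are pairwise distinct, and all harvest values h_1, …, h_T are pairwise distinct. For each j for which a feasible schedule of {1,…,j} exists, let S_j denote the unique feasible schedule with J(S_j) = {1,…,j}, scheduling jobs in non-decreasing order of energy requirement, that maximizes E_S(T+1). Then for every i > 1 such that S_i is defined, the set of time slots used by S_{i−1} is a subset of the set of time slots used by S_i; that is, π_{S_{i−1}}(J(S_{i−1})) ⊆ π_{S_i}(J(S_i)). -/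
/-- A schedule `(J, σ)` executes its jobs in non-decreasing order of energy
requirement. -/
def SortedByEnergy (e : ℕ → ℤ) (J : Finset ℕ) (σ : ℕ → ℕ) : Prop :=
  ∀ i ∈ J, ∀ j ∈ J, σ i < σ j → e i ≤ e j

/-- `(Finset.Icc 1 j, σ)` is the schedule `S_j`: the feasible schedule of jobs
`{1,…,j}`, executing its jobs in non-decreasing order of energy requirement,
that maximizes the available energy `E_S(T+1)` among all such schedules. -/
def IsMaxEnergySched (n T : ℕ) (e h : ℕ → ℤ) (j : ℕ) (σ : ℕ → ℕ) : Prop :=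
  IsFeasible n T (fun _ => 1) (fun _ => T) e h (Finset.Icc 1 j) σ ∧
    SortedByEnergy e (Finset.Icc 1 j) σ ∧
    ∀ σ' : ℕ → ℕ,
      IsFeasible n T (fun _ => 1) (fun _ => T) e h (Finset.Icc 1 j) σ' →
      SortedByEnergy e (Finset.Icc 1 j) σ' →
      energyBefore e h (Finset.Icc 1 j) σ' (T + 1) ≤
        energyBefore e h (Finset.Icc 1 j) σ (T + 1)

namespace EAS

open Finset

def harvestBefore (h : ℕ → ℤ) (u : ℕ) : ℤ := ∑ τ ∈ Icc 1 (u - 1), h τ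

def demand (e : ℕ → ℤ) (k : ℕ) : ℤ := ∑ l ∈ Icc 1 k, e l

/-- Run in increasing order of energy requirement on the slots of `S`, the job at slot `s` is
job `#{x ∈ S | x ≤ s}`; this is its energy constraint. -/
def IsFeasibleSlotSet (T : ℕ) (e h : ℕ → ℤ) (S : Finset ℕ) : Prop :=
  S ⊆ Icc 1 T ∧
    ∀ s ∈ S, demand e #{x ∈ S | x ≤ s} + ∑ x ∈ S with x < s, h x ≤ harvestBefore h s

def IsOptimalSlotSet (T : ℕ) (e h : ℕ → ℤ) (j : ℕ) (S : Finset ℕ) : Prop :=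
  IsFeasibleSlotSet T e h S ∧ #S = j ∧
    ∀ S', IsFeasibleSlotSet T e h S' → #S' = j → ∑ s ∈ S, h s ≤ ∑ s ∈ S', h s

theorem filter_le_eq_insert_filter_lt {α : Type*} [LinearOrder α] {S : Finset α} {s : α}
    (hs : s ∈ S) : {x ∈ S | x ≤ s} = insert s {x ∈ S | x < s} := by
  ext x
  simp only [mem_filter, mem_insert]
  constructor
  · rintro ⟨hx, hxs⟩
    rcases hxs.eq_or_lt with rfl | hxs
    exacts [Or.inl rfl, Or.inr ⟨hx, hxs⟩]
  · rintro (rfl | ⟨hx, hxs⟩)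
    exacts [⟨hs, le_rfl⟩, ⟨hx, hxs.le⟩]

variable {T : ℕ} {e h : ℕ → ℤ}

theorem demand_mono (he : ∀ i, 0 ≤ e i) : Monotone (demand e) := fun _ _ hkl =>
  sum_le_sum_of_subset_of_nonneg (Icc_subset_Icc_right hkl) fun i _ _ => he i

theorem demand_succ (k : ℕ) : demand e (k + 1) = demand e k + e (k + 1) :=
  sum_Icc_succ_top (by omega) e

theorem harvestBefore_nonneg (hh : ∀ t, 0 ≤ h t) (u : ℕ) : 0 ≤ harvestBefore h u :=
  sum_nonneg fun t _ => hh t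

theorem harvestBefore_add_le (hh : ∀ t, 0 ≤ h t) {s u : ℕ} (hs : 1 ≤ s) (hsu : s < u) :
    harvestBefore h s + h s ≤ harvestBefore h u := by
  have hsucc : harvestBefore h s + h s = ∑ τ ∈ Icc 1 s, h τ := by
    obtain ⟨k, rfl⟩ := Nat.exists_eq_add_of_le' hs
    simp [harvestBefore, sum_Icc_succ_top]
  rw [hsucc]
  exact sum_le_sum_of_subset_of_nonneg (Icc_subset_Icc_right (by omega)) fun t _ _ => hh t

theorem IsFeasibleSlotSet.le_harvestBefore (hh : ∀ t, 0 ≤ h t) {S : Finset ℕ}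
    (hS : IsFeasibleSlotSet T e h S) (u : ℕ) :
    demand e #{x ∈ S | x ≤ u} + ∑ x ∈ S with x < u, h x ≤ harvestBefore h u := by
  rcases eq_empty_or_nonempty {x ∈ S | x ≤ u} with hempty | hne
  · have hlt : {x ∈ S | x < u} = ∅ := by
      simp only [filter_eq_empty_iff] at hempty ⊢
      exact fun x hx hxu => hempty hx hxu.le
    simpa [hempty, hlt, demand] using harvestBefore_nonneg hh u
  obtain ⟨s, hs, hmax⟩ : ∃ s ∈ {x ∈ S | x ≤ u}, ∀ x ∈ {x ∈ S | x ≤ u}, x ≤ s :=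
    ⟨_, max'_mem _ hne, fun x hx => le_max' _ x hx⟩
  simp only [mem_filter] at hs hmax
  obtain ⟨hsS, hsu⟩ := hs
  have hle : {x ∈ S | x ≤ u} = {x ∈ S | x ≤ s} := by
    ext x
    simp only [mem_filter, and_congr_right_iff]
    exact fun hx => ⟨fun hxu => hmax x ⟨hx, hxu⟩, fun hxs => hxs.trans hsu⟩
  rcases hsu.eq_or_lt with rfl | hsu
  · exact hS.2 s hsS
  have hlt : {x ∈ S | x < u} = {x ∈ S | x ≤ s} := by
    ext x
    simp only [mem_filter, and_congr_right_iff]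
    exact fun hx => ⟨fun hxu => hmax x ⟨hx, hxu.le⟩, fun hxs => hxs.trans_lt hsu⟩
  have hsum : ∑ x ∈ S with x ≤ s, h x = h s + ∑ x ∈ S with x < s, h x := by
    rw [filter_le_eq_insert_filter_lt hsS, sum_insert (by simp)]
  rw [hle, hlt, hsum]
  linarith [hS.2 s hsS, harvestBefore_add_le hh (mem_Icc.1 (hS.1 hsS)).1 hsu]

theorem IsFeasibleSlotSet.erase (he : ∀ i, 0 ≤ e i) (hh : ∀ t, 0 ≤ h t) {S : Finset ℕ}
    (hS : IsFeasibleSlotSet T e h S) (b : ℕ) : IsFeasibleSlotSet T e h (S.erase b) := by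
  refine ⟨(erase_subset b S).trans hS.1, fun s hs => ?_⟩
  have hcount : #{x ∈ S.erase b | x ≤ s} ≤ #{x ∈ S | x ≤ s} :=
    card_le_card (filter_subset_filter _ (erase_subset b S))
  have hsum : ∑ x ∈ S.erase b with x < s, h x ≤ ∑ x ∈ S with x < s, h x :=
    sum_le_sum_of_subset_of_nonneg (filter_subset_filter _ (erase_subset b S))
      fun t _ _ => hh t
  linarith [demand_mono he hcount, hS.2 s (mem_of_mem_erase hs)]

theorem sum_filter_le_sum_filter {ι M : Type*} [AddCommMonoid M] [PartialOrder M]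
    [IsOrderedCancelAddMonoid M] {f : ι → M} (hf : ∀ x, 0 ≤ f x) {p : ι → Prop}
    [DecidablePred p] {B C : Finset ι} (htot : ∑ x ∈ C, f x ≤ ∑ x ∈ B, f x)
    (hsub : {x ∈ B | ¬ p x} ⊆ {x ∈ C | ¬ p x}) :
    ∑ x ∈ C with p x, f x ≤ ∑ x ∈ B with p x, f x := by
  rw [← sum_filter_add_sum_filter_not C p, ← sum_filter_add_sum_filter_not B p] at htot
  exact le_of_add_le_add_right <| htot.trans <|
    add_le_add_right (sum_le_sum_of_subset_of_nonneg hsub fun x _ _ => hf x) _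

/-- From slot `t` on, every slot of `B` after a slot `s` lies in `insert t A`, so up to `s` the
set `insert t A` has no more slots, and before `s` no more harvest, than `B`. -/
theorem IsFeasibleSlotSet.insert_of_exchange (he : ∀ i, 0 ≤ e i) (hh : ∀ t, 0 ≤ h t)
    {A B : Finset ℕ} {t : ℕ} (hA : IsFeasibleSlotSet T e h A) (hB : IsFeasibleSlotSet T e h B)
    (hcard : #A + 1 = #B) (htB : t ∈ B) (htA : t ∉ A) (hmax : ∀ x ∈ B, x ∉ A → x ≤ t)
    (hcost : ∑ x ∈ A, h x + h t ≤ ∑ x ∈ B, h x) : IsFeasibleSlotSet T e h (insert t A) := by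
  refine ⟨insert_subset (hB.1 htB) hA.1, fun s hs => ?_⟩
  by_cases hst : s < t
  · rw [filter_insert, if_neg (by omega), filter_insert, if_neg (by omega)]
    exact hA.2 s (mem_of_mem_insert_of_ne hs (by omega))
  have htail : ∀ {p : ℕ → Prop} [DecidablePred p], (∀ x, ¬ p x → s ≤ x) →
      {x ∈ B | ¬ p x} ⊆ {x ∈ insert t A | ¬ p x} := by
    intro p _ hp x hx
    rw [mem_filter] at hx ⊢
    refine ⟨?_, hx.2⟩
    by_cases hxA : x ∈ A
    · exact mem_insert_of_mem hxA
    · have := hmax x hx.1 hxA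
      have := hp x hx.2
      rw [show x = t by omega]
      exact mem_insert_self t A
  have hcount : #{x ∈ insert t A | x ≤ s} ≤ #{x ∈ B | x ≤ s} := by
    simp only [card_eq_sum_ones]
    refine sum_filter_le_sum_filter (fun _ => Nat.zero_le 1) ?_ (htail fun x hx => by omega)
    rw [← card_eq_sum_ones, ← card_eq_sum_ones, card_insert_of_notMem htA, hcard]
  have hsum : ∑ x ∈ insert t A with x < s, h x ≤ ∑ x ∈ B with x < s, h x :=
    sum_filter_le_sum_filter hh (by rw [sum_insert htA]; linarith) (htail fun x hx => by omega)
  linarith [demand_mono he hcount, hB.le_harvestBefore hh s]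

theorem IsOptimalSlotSet.exists_exchange (he : ∀ i, 0 ≤ e i) (hh : ∀ t, 0 ≤ h t) {j : ℕ}
    {A B : Finset ℕ} (hA : IsOptimalSlotSet T e h j A) (hB : IsOptimalSlotSet T e h (j + 1) B) :
    ∃ t ∈ B, IsOptimalSlotSet T e h j (B.erase t) ∧ ∑ x ∈ B, h x = ∑ x ∈ A, h x + h t := by
  obtain ⟨hAf, hAc, hAmin⟩ := hA
  obtain ⟨hBf, hBc, hBmin⟩ := hB
  have hne : (B \ A).Nonempty := sdiff_nonempty.2 fun hBA => by
    have := card_le_card hBA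
    omega
  obtain ⟨htB, htA⟩ := mem_sdiff.1 (max'_mem _ hne)
  set t := max' _ hne
  have hmax : ∀ x ∈ B, x ∉ A → x ≤ t := fun x hxB hxA => le_max' _ x (mem_sdiff.2 ⟨hxB, hxA⟩)
  have herase_card : #(B.erase t) = j := by rw [card_erase_of_mem htB, hBc]; rfl
  have hAle : ∑ x ∈ A, h x + h t ≤ ∑ x ∈ B, h x := by
    have := hAmin _ (hBf.erase he hh t) herase_card
    rw [sum_erase_eq_sub htB] at this
    linarith
  have hBle : ∑ x ∈ B, h x ≤ ∑ x ∈ A, h x + h t := by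
    have := hBmin _ (hAf.insert_of_exchange he hh hBf (by omega) htB htA hmax hAle)
      (by rw [card_insert_of_notMem htA, hAc])
    rwa [sum_insert htA, add_comm] at this
  have hcost : ∑ x ∈ B, h x = ∑ x ∈ A, h x + h t := le_antisymm hBle hAle
  refine ⟨t, htB, ⟨hBf.erase he hh t, herase_card, fun S hS hSc => ?_⟩, hcost⟩
  rw [sum_erase_eq_sub htB]
  linarith [hAmin S hS hSc]

theorem exists_isOptimalSlotSet {S : Finset ℕ} (hS : IsFeasibleSlotSet T e h S) :
    ∃ A, IsOptimalSlotSet T e h #S A := by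
  classical
  obtain ⟨A, hA, hAmin⟩ := exists_min_image
    {A ∈ (Icc 1 T).powerset | IsFeasibleSlotSet T e h A ∧ #A = #S} (fun A => ∑ x ∈ A, h x)
    ⟨S, mem_filter.2 ⟨mem_powerset.2 hS.1, hS, rfl⟩⟩
  obtain ⟨-, hAf, hAc⟩ := mem_filter.1 hA
  exact ⟨A, hAf, hAc, fun S' hS' hS'c => hAmin S' (mem_filter.2 ⟨mem_powerset.2 hS'.1, hS', hS'c⟩)⟩

theorem IsOptimalSlotSet.unique (he : ∀ i, 0 ≤ e i) (hh : ∀ t, 0 ≤ h t)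
    (hinj : Set.InjOn h (Set.Icc 1 T)) {j : ℕ} {B B' : Finset ℕ}
    (hB : IsOptimalSlotSet T e h j B) (hB' : IsOptimalSlotSet T e h j B') : B = B' := by
  induction j generalizing B B' with
  | zero => rw [card_eq_zero.1 hB.2.1, card_eq_zero.1 hB'.2.1]
  | succ j ih =>
    obtain ⟨b, hb⟩ := card_pos.1 (by rw [hB.2.1]; omega)
    obtain ⟨A, hA⟩ := exists_isOptimalSlotSet (hB.1.erase he hh b)
    rw [card_erase_of_mem hb, hB.2.1, Nat.add_sub_cancel] at hA
    obtain ⟨t, htB, hBt, hcost⟩ := hA.exists_exchange he hh hB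
    obtain ⟨t', htB', hBt', hcost'⟩ := hA.exists_exchange he hh hB'
    have hBB' : ∑ x ∈ B, h x = ∑ x ∈ B', h x :=
      le_antisymm (hB.2.2 B' hB'.1 hB'.2.1) (hB'.2.2 B hB.1 hB.2.1)
    have htt' : t = t' := hinj (by simpa using hB.1.1 htB) (by simpa using hB'.1.1 htB')
      (by linarith)
    calc B = insert t (B.erase t) := (insert_erase htB).symm
      _ = insert t' (B'.erase t') := by rw [ih hBt hA, ih hBt' hA, htt']
      _ = B' := insert_erase htB'

theorem IsOptimalSlotSet.subset_of_succ (he : ∀ i, 0 ≤ e i) (hh : ∀ t, 0 ≤ h t)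
    (hinj : Set.InjOn h (Set.Icc 1 T)) {j : ℕ} {A B : Finset ℕ}
    (hA : IsOptimalSlotSet T e h j A) (hB : IsOptimalSlotSet T e h (j + 1) B) : A ⊆ B := by
  obtain ⟨t, -, hBt, -⟩ := hA.exists_exchange he hh hB
  exact (hBt.unique he hh hinj hA) ▸ erase_subset t B

theorem filter_Icc_eq_Icc_card {p : ℕ → Prop} [DecidablePred p] {j : ℕ}
    (hp : ∀ a b, 1 ≤ a → a ≤ b → b ≤ j → p b → p a) :
    {i ∈ Icc 1 j | p i} = Icc 1 #{i ∈ Icc 1 j | p i} := by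
  set F := {i ∈ Icc 1 j | p i}
  suffices hF : F = Icc 1 (F.sup id) by rw [hF, Nat.card_Icc, Nat.add_sub_cancel]
  refine Subset.antisymm (fun x hx => mem_Icc.2 ⟨(mem_Icc.1 (mem_filter.1 hx).1).1,
    le_sup (f := id) hx⟩) fun x hx => ?_
  rcases F.eq_empty_or_nonempty with hempty | hne
  · simp [hempty] at hx
  obtain ⟨m, hm, hmsup⟩ := exists_mem_eq_sup F hne id
  rw [hmsup, mem_Icc] at hx
  obtain ⟨hmj, hpm⟩ := mem_filter.1 hm
  rw [mem_Icc] at hmj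
  exact mem_filter.2 ⟨mem_Icc.2 ⟨hx.1, hx.2.trans hmj.2⟩, hp x m hx.1 hx.2 hmj.2 hpm⟩

variable {σ : ℕ → ℕ} {j : ℕ}

theorem card_filter_image_lt_of_strictMonoOn (hσ : StrictMonoOn σ (Set.Icc 1 j)) {i : ℕ}
    (hi : i ∈ Icc 1 j) : #{x ∈ (Icc 1 j).image σ | x < σ i} = i - 1 := by
  have hrank : {l ∈ Icc 1 j | σ l < σ i} = Icc 1 (i - 1) := by
    ext l
    rw [mem_filter, mem_Icc, mem_Icc]
    rw [mem_Icc] at hi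
    constructor
    · rintro ⟨hl, hlt⟩
      have := (hσ.lt_iff_lt hl hi).1 hlt
      omega
    · rintro ⟨h1, h2⟩
      exact ⟨⟨h1, by omega⟩, hσ ⟨h1, by omega⟩ hi (by omega)⟩
  have hinj : Set.InjOn σ ↑({l ∈ Icc 1 j | σ l < σ i} : Finset ℕ) :=
    hσ.injOn.mono fun x hx => mem_Icc.1 (mem_filter.1 hx).1
  rw [filter_image, card_image_of_injOn hinj, hrank, Nat.card_Icc, Nat.add_sub_cancel]

end EAS

open EAS Finset

variable {e h : ℕ → ℤ} {σ : ℕ → ℕ} {j : ℕ}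

theorem energyBefore_eq_of_strictMonoOn (hσ : StrictMonoOn σ (Set.Icc 1 j)) (u : ℕ) :
    energyBefore e h (Icc 1 j) σ u = harvestBefore h u -
      (demand e #{x ∈ (Icc 1 j).image σ | x < u} + ∑ x ∈ (Icc 1 j).image σ with x < u, h x) := by
  have hinj : Set.InjOn σ ↑({i ∈ Icc 1 j | σ i < u} : Finset ℕ) :=
    hσ.injOn.mono fun x hx => mem_Icc.1 (mem_filter.1 hx).1
  have hF := filter_Icc_eq_Icc_card (p := fun i => σ i < u) fun a b ha hab hbj hb =>
    (hσ.monotoneOn ⟨ha, hab.trans hbj⟩ ⟨ha.trans hab, hbj⟩ hab).trans_lt hb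
  rw [filter_image, card_image_of_injOn hinj, sum_image hinj, energyBefore, sum_add_distrib,
    demand, ← hF]
  rfl

theorem isFeasible_iff_of_strictMonoOn {n T : ℕ} (hσ : StrictMonoOn σ (Set.Icc 1 j)) :
    IsFeasible n T (fun _ => 1) (fun _ => T) e h (Icc 1 j) σ ↔
      Icc 1 j ⊆ Icc 1 n ∧ IsFeasibleSlotSet T e h ((Icc 1 j).image σ) := by
  have hjob : ∀ i ∈ Icc 1 j, e i ≤ energyBefore e h (Icc 1 j) σ (σ i) ↔
      demand e #{x ∈ (Icc 1 j).image σ | x ≤ σ i} + ∑ x ∈ (Icc 1 j).image σ with x < σ i, h x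
        ≤ harvestBefore h (σ i) := by
    intro i hi
    rw [energyBefore_eq_of_strictMonoOn hσ, filter_le_eq_insert_filter_lt (mem_image_of_mem σ hi),
      card_insert_of_notMem (by simp), card_filter_image_lt_of_strictMonoOn hσ hi, demand_succ,
      Nat.sub_add_cancel (mem_Icc.1 hi).1]
    constructor <;> intro <;> linarith
  constructor
  · rintro ⟨hsub, -, hjobs⟩
    refine ⟨hsub, image_subset_iff.2 fun i hi => ?_, forall_mem_image.2 fun i hi => ?_⟩
    · exact mem_Icc.2 ⟨(hjobs i hi).1, (hjobs i hi).2.1⟩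
    · exact (hjob i hi).1 (hjobs i hi).2.2.2.2
  · rintro ⟨hsub, hS, hcond⟩
    refine ⟨hsub, hσ.injOn.mono (by simp), fun i hi => ?_⟩
    obtain ⟨h1, h2⟩ := mem_Icc.1 (hS (mem_image_of_mem σ hi))
    exact ⟨h1, h2, h1, h2, (hjob i hi).2 (hcond _ (mem_image_of_mem σ hi))⟩

theorem energyBefore_succ_eq_of_strictMonoOn {T : ℕ} (hσ : StrictMonoOn σ (Set.Icc 1 j))
    (hS : (Icc 1 j).image σ ⊆ Icc 1 T) :
    energyBefore e h (Icc 1 j) σ (T + 1) =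
      harvestBefore h (T + 1) - (demand e j + ∑ x ∈ (Icc 1 j).image σ, h x) := by
  rw [energyBefore_eq_of_strictMonoOn hσ,
    filter_true_of_mem fun x hx => Nat.lt_succ_of_le (mem_Icc.1 (hS hx)).2,
    card_image_of_injOn (hσ.injOn.mono (by simp)), Nat.card_Icc, Nat.add_sub_cancel]

theorem strictMonoOn_of_sortedByEnergy (he : StrictMonoOn e (Set.Icc 1 j))
    (hinj : Set.InjOn σ ↑(Icc 1 j)) (hsort : SortedByEnergy e (Icc 1 j) σ) :
    StrictMonoOn σ (Set.Icc 1 j) := by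
  intro a ha b hb hab
  rcases lt_trichotomy (σ a) (σ b) with hlt | heq | hgt
  · exact hlt
  · exact absurd (hinj (by simpa using ha) (by simpa using hb) heq) hab.ne
  · exact absurd (hsort b (by simpa using hb) a (by simpa using ha) hgt) (not_le.2 (he ha hb hab))

theorem sortedByEnergy_of_strictMonoOn (he : MonotoneOn e (Set.Icc 1 j))
    (hσ : StrictMonoOn σ (Set.Icc 1 j)) : SortedByEnergy e (Icc 1 j) σ := by
  intro a ha b hb hab
  rw [mem_Icc] at ha hb
  exact he ha hb ((hσ.lt_iff_lt ha hb).1 hab).le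

theorem Finset.exists_strictMonoOn_image_Icc_eq (S : Finset ℕ) :
    ∃ σ : ℕ → ℕ, StrictMonoOn σ (Set.Icc 1 #S) ∧ (Icc 1 #S).image σ = S := by
  have hf : (Set.ofPred (· ∈ S)).Finite := S.finite_toSet
  have hcard : #hf.toFinset = #S := by simp
  refine ⟨fun i => Nat.nth (· ∈ S) (i - 1), fun a ha b hb hab => ?_, ?_⟩
  · exact Nat.nth_lt_nth_of_lt_card hf (by simp at ha hb; omega) (by simp at hb; omega)
  ext x
  simp only [mem_image, mem_Icc]
  constructor
  · rintro ⟨i, hi, rfl⟩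
    exact Nat.nth_mem_of_lt_card hf (by omega)
  · intro hx
    obtain ⟨k, hk, rfl⟩ := Nat.exists_lt_card_finite_nth_eq hf hx
    exact ⟨k + 1, by omega, rfl⟩

theorem IsMaxEnergySched.isOptimalSlotSet {n T : ℕ} (he : StrictMonoOn e (Set.Icc 1 j))
    (hσ : IsMaxEnergySched n T e h j σ) : IsOptimalSlotSet T e h j ((Icc 1 j).image σ) := by
  obtain ⟨hfeas, hsort, hmax⟩ := hσ
  have hmono := strictMonoOn_of_sortedByEnergy he hfeas.2.1 hsort
  obtain ⟨hjn, hS⟩ := (isFeasible_iff_of_strictMonoOn hmono).1 hfeas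
  refine ⟨hS, ?_, fun S' hS' hS'c => ?_⟩
  · rw [card_image_of_injOn hfeas.2.1, Nat.card_Icc, Nat.add_sub_cancel]
  obtain ⟨σ', hσ', hσ'S⟩ := S'.exists_strictMonoOn_image_Icc_eq
  rw [hS'c] at hσ' hσ'S
  have hfeas' := (isFeasible_iff_of_strictMonoOn hσ').2 ⟨hjn, hσ'S ▸ hS'⟩
  have := hmax σ' hfeas' (sortedByEnergy_of_strictMonoOn he.monotoneOn hσ')
  rw [energyBefore_succ_eq_of_strictMonoOn hmono hS.1,
    energyBefore_succ_eq_of_strictMonoOn hσ' (hσ'S ▸ hS'.1), hσ'S] at this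
  linarith

theorem slots_nested_general (n T : ℕ) (e h : ℕ → ℤ)
    (he : ∀ i, 0 ≤ e i) (hh : ∀ t, 0 ≤ h t)
    (hmono : ∀ i j, 1 ≤ i → i < j → j ≤ n → e i < e j)
    (hdist : ∀ s t, 1 ≤ s → s < t → t ≤ T → h s ≠ h t)
    (i : ℕ)
    (σprev σcur : ℕ → ℕ)
    (hprev : IsMaxEnergySched n T e h (i - 1) σprev)
    (hcur : IsMaxEnergySched n T e h i σcur) :
    (Finset.Icc 1 (i - 1)).image σprev ⊆ (Finset.Icc 1 i).image σcur := by
  obtain _ | j := i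
  · simp
  rw [Nat.add_sub_cancel] at hprev ⊢
  have hjn : j + 1 ≤ n := ((Icc_subset_Icc_iff (by omega)).1 hcur.1.1).2
  have he_mono : StrictMonoOn e (Set.Icc 1 n) := fun a ha b hb hab => hmono a b ha.1 hab hb.2
  have hinj : Set.InjOn h (Set.Icc 1 T) := by
    intro s hs t ht hst
    by_contra hne
    rcases Nat.lt_or_gt_of_ne hne with hlt | hlt
    exacts [hdist s t hs.1 hlt ht.2 hst, hdist t s ht.1 hlt hs.2 hst.symm]
  exact IsOptimalSlotSet.subset_of_succ he hh hinj
    (hprev.isOptimalSlotSet (he_mono.mono (Set.Icc_subset_Icc_right (by omega))))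
    (hcur.isOptimalSlotSet (he_mono.mono (Set.Icc_subset_Icc_right hjn)))

/-- With identical release times `1` and due dates `T`, strictly
increasing energy requirements and pairwise-distinct harvest values, whenever
`S_i` is defined (`i > 1`), the set of time slots used by `S_{i-1}` is contained
in the set of time slots used by `S_i`. -/
theorem slots_nested (n T : ℕ) (e h : ℕ → ℤ)
    (he : ∀ i, 0 ≤ e i) (hh : ∀ t, 0 ≤ h t)
    (hmono : ∀ i j, 1 ≤ i → i < j → j ≤ n → e i < e j)
    (hdist : ∀ s t, 1 ≤ s → s < t → t ≤ T → h s ≠ h t)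
    (i : ℕ) (hi2 : 2 ≤ i) (hin : i ≤ n)
    (σprev σcur : ℕ → ℕ)
    (hprev : IsMaxEnergySched n T e h (i - 1) σprev)
    (hcur : IsMaxEnergySched n T e h i σcur) :
    (Finset.Icc 1 (i - 1)).image σprev ⊆ (Finset.Icc 1 i).image σcur :=
  slots_nested_general n T e h he hh hmono hdist i σprev σcur hprev hcur
end

section
/- Let O be a feasible schedule of maximum cardinality, with |J(O)| = m, and let (J^g_1, t_1), …, (J^g_x, t_x) be a greedy sequence for the instance. Then for every ℓ ∈ {0, 1, …, x} there exists a feasible schedule S such that: (i) |J(S)| ≥ max{ℓ, m − ℓ}; (ii) {J^g_1, …, J^g_ℓ} ⊆ J(S) and π_S(J^g_i) = t_i for every i ∈ {1,…,ℓ}; and (iii) J(S) ∖ {J^g_1, …, J^g_ℓ} ⊆ J(O). -/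
/-- `(g, σ)` is a greedy sequence of length `x`: `g 1, …, g x` are the (pairwise
distinct) jobs scheduled by the greedy algorithm, in order, and `σ (g ℓ)` is the
(pairwise distinct) time slot assigned to job `g ℓ`.  For every `ℓ`, the partial
greedy schedule `G_ℓ` (jobs `g 1, …, g ℓ` at their slots) is feasible, and the
pair `(g ℓ, σ (g ℓ))` minimizes `e j + h t` over all pairs `(j, t)` of an
unscheduled job and an unused slot whose addition to `G_{ℓ-1}` keeps the
schedule feasible; moreover the sequence is maximal. -/
def GreedySeq (n T : ℕ) (r d : ℕ → ℕ) (e h : ℕ → ℤ)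
    (x : ℕ) (g σ : ℕ → ℕ) : Prop :=
  Set.InjOn g ↑(Finset.Icc 1 x) ∧
  (∀ ℓ, 1 ≤ ℓ → ℓ ≤ x →
    IsFeasible n T r d e h ((Finset.Icc 1 ℓ).image g) σ ∧
      ∀ j t : ℕ, j ∈ Finset.Icc 1 n → j ∉ (Finset.Icc 1 (ℓ - 1)).image g →
        t ∈ Finset.Icc 1 T → t ∉ ((Finset.Icc 1 (ℓ - 1)).image g).image σ →
        IsFeasible n T r d e h (insert j ((Finset.Icc 1 (ℓ - 1)).image g))
          (Function.update σ j t) →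
        e (g ℓ) + h (σ (g ℓ)) ≤ e j + h t) ∧
  (∀ j t : ℕ, j ∈ Finset.Icc 1 n → j ∉ (Finset.Icc 1 x).image g →
    t ∈ Finset.Icc 1 T → t ∉ ((Finset.Icc 1 x).image g).image σ →
    ¬ IsFeasible n T r d e h (insert j ((Finset.Icc 1 x).image g))
        (Function.update σ j t))

/-!
Induction on `ℓ`, exchanging one job per greedy step. Let `S` be feasible, contain `G_ℓ` at the
greedy slots and otherwise only jobs of `O`. Insert `j = g (ℓ + 1)` at its greedy slot `t` and drop
one job `w ∉ G_ℓ` of `S`: the job at slot `t` if there is one, else the earliest job of `S` outside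
`G_ℓ`. Since `G_ℓ` plus `w` at its slot is a feasible extension, the greedy choice gives
`e j + h t ≤ e w + h (σ w)`, so the new schedule has at least the energy of `S` before every slot,
except possibly at slots in `(t, σ w]`; before those slots only greedy jobs have run, and the
energy equals that of the feasible greedy schedule `G_{ℓ+1}`.
-/

section Energy

variable {e h : ℕ → ℤ}

lemma energyBefore_congr {J : Finset ℕ} {σ₁ σ₂ : ℕ → ℕ} (hσ : ∀ i ∈ J, σ₁ i = σ₂ i) (t : ℕ) :
    energyBefore e h J σ₁ t = energyBefore e h J σ₂ t := by
  unfold energyBefore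
  rw [Finset.filter_congr fun i hi => by rw [hσ i hi]]
  exact congrArg _ (Finset.sum_congr rfl fun i hi => by rw [hσ i (Finset.mem_filter.1 hi).1])

lemma energyBefore_le_of_subset (he : ∀ i, 0 ≤ e i) (hh : ∀ t, 0 ≤ h t)
    {J₁ J₂ : Finset ℕ} {σ₁ σ₂ : ℕ → ℕ} (hJ : J₁ ⊆ J₂) (hσ : ∀ i ∈ J₁, σ₁ i = σ₂ i) (t : ℕ) :
    energyBefore e h J₂ σ₂ t ≤ energyBefore e h J₁ σ₁ t := by
  rw [energyBefore_congr hσ]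
  exact sub_le_sub_left (Finset.sum_le_sum_of_subset_of_nonneg (Finset.filter_subset_filter _ hJ)
    fun i _ _ => add_nonneg (he i) (hh _)) _

lemma energyBefore_filter (J : Finset ℕ) (σ : ℕ → ℕ) (t : ℕ) :
    energyBefore e h (J.filter (σ · < t)) σ t = energyBefore e h J σ t := by
  simp only [energyBefore, Finset.filter_filter, and_self]

lemma energyBefore_erase {J : Finset ℕ} {w : ℕ} (hw : w ∈ J) (σ : ℕ → ℕ) (t : ℕ) :
    energyBefore e h (J.erase w) σ t
      = energyBefore e h J σ t + if σ w < t then e w + h (σ w) else 0 := by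
  unfold energyBefore
  split_ifs with hwt
  · rw [Finset.filter_erase, Finset.sum_erase_eq_sub (Finset.mem_filter.2 ⟨hw, hwt⟩)]
    ring
  · rw [Finset.filter_erase, Finset.erase_eq_of_notMem (by simp [hwt])]
    ring

lemma energyBefore_insert {J : Finset ℕ} {j : ℕ} (hj : j ∉ J) (σ : ℕ → ℕ) (t : ℕ) :
    energyBefore e h (insert j J) σ t
      = energyBefore e h J σ t - if σ j < t then e j + h (σ j) else 0 := by
  unfold energyBefore
  rw [Finset.filter_insert]
  split_ifs
  · rw [Finset.sum_insert fun hmem => hj (Finset.mem_filter.1 hmem).1]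
    ring
  · ring

lemma energyBefore_add_one (J : Finset ℕ) (σ : ℕ → ℕ) {t : ℕ} (ht : 1 ≤ t) :
    energyBefore e h J σ (t + 1)
      = energyBefore e h J σ t + h t - ∑ i ∈ J.filter (σ · = t), (e i + h (σ i)) := by
  obtain ⟨s, rfl⟩ := Nat.exists_eq_add_of_le' ht
  have hsplit : ∑ i ∈ J.filter (σ · < s + 1 + 1), (e i + h (σ i))
      = ∑ i ∈ J.filter (σ · < s + 1), (e i + h (σ i))
        + ∑ i ∈ J.filter (σ · = s + 1), (e i + h (σ i)) := by
    simp only [Finset.sum_filter, ← Finset.sum_add_distrib]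
    refine Finset.sum_congr rfl fun i _ => ?_
    split_ifs <;> omega
  simp only [energyBefore, Nat.add_sub_cancel, hsplit,
    Finset.sum_Icc_succ_top (Nat.le_add_left 1 s)]
  ring

end Energy

section Feasible

variable {n T : ℕ} {r d : ℕ → ℕ} {e h : ℕ → ℤ}

lemma IsFeasible.mono (he : ∀ i, 0 ≤ e i) (hh : ∀ t, 0 ≤ h t) {J K : Finset ℕ} {σ τ : ℕ → ℕ}
    (hS : IsFeasible n T r d e h J σ) (hKJ : K ⊆ J) (hτ : ∀ i ∈ K, τ i = σ i) :
    IsFeasible n T r d e h K τ := by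
  obtain ⟨hJn, hinj, hjob⟩ := hS
  refine ⟨hKJ.trans hJn, fun i hi j hj hij => ?_, fun i hi => ?_⟩
  · rw [hτ i hi, hτ j hj] at hij
    exact hinj (hKJ hi) (hKJ hj) hij
  · rw [hτ i hi]
    obtain ⟨h1, h2, h3, h4, hen⟩ := hjob i (hKJ hi)
    exact ⟨h1, h2, h3, h4, hen.trans (energyBefore_le_of_subset he hh hKJ hτ _)⟩

lemma IsFeasible.energyBefore_nonneg (hh : ∀ t, 0 ≤ h t) {J : Finset ℕ} {σ : ℕ → ℕ}
    (hS : IsFeasible n T r d e h J σ) (t : ℕ) : 0 ≤ energyBefore e h J σ t := by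
  obtain ⟨-, hinj, hjob⟩ := hS
  induction t with
  | zero => simp [energyBefore]
  | succ t ih =>
    rcases Nat.eq_zero_or_pos t with rfl | ht
    · have hnone : J.filter (σ · < 1) = ∅ :=
        Finset.filter_false_of_mem fun i hi => by have := (hjob i hi).1; omega
      simp only [energyBefore, zero_add, hnone]
      simp
    rw [energyBefore_add_one J σ ht]
    rcases (J.filter (σ · = t)).eq_empty_or_nonempty with hnone | ⟨i, hi⟩
    · rw [hnone, Finset.sum_empty]
      linarith [hh t]
    obtain ⟨hiJ, rfl⟩ := Finset.mem_filter.1 hi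
    have hsingle : J.filter (σ · = σ i) = {i} :=
      Finset.eq_singleton_iff_unique_mem.2 ⟨hi, fun j hj =>
        hinj (Finset.mem_filter.1 hj).1 hiJ (Finset.mem_filter.1 hj).2⟩
    rw [hsingle, Finset.sum_singleton]
    linarith [(hjob i hiJ).2.2.2.2]

end Feasible

section Exchange

variable {n T : ℕ} {r d : ℕ → ℕ} {e h : ℕ → ℤ} {J G : Finset ℕ} {σS σ : ℕ → ℕ} {js w : ℕ}

lemma energyBefore_exchange (he : ∀ i, 0 ≤ e i) (hh : ∀ t, 0 ≤ h t) (hw : w ∈ J) (ts t : ℕ) :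
    energyBefore e h J σS t + (if σS w < t then e w + h (σS w) else 0)
        - (if ts < t then e js + h ts else 0)
      ≤ energyBefore e h (insert js (J.erase w)) (Function.update σS js ts) t := by
  set K := (J.erase w).erase js
  have hK : insert js (J.erase w) = insert js K := by
    ext i; by_cases hi : i = js <;> simp [K, hi]
  have hσ : ∀ i ∈ K, Function.update σS js ts i = σS i :=
    fun i hi => Function.update_of_ne (Finset.ne_of_mem_erase hi) _ _
  rw [hK, energyBefore_insert (Finset.notMem_erase js _), energyBefore_congr hσ,
    Function.update_self, ← energyBefore_erase hw]
  exact sub_le_sub_right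
    (energyBefore_le_of_subset he hh (Finset.erase_subset _ _) (fun _ _ => rfl) t) _

lemma energyBefore_le_exchange_of_forall_le (he : ∀ i, 0 ≤ e i) (hh : ∀ t, 0 ≤ h t)
    (hagree : ∀ u ∈ G, σS u = σ u) {t : ℕ} (hlate : ∀ a ∈ J, a ∉ G → t ≤ σS a) :
    energyBefore e h (insert js G) σ t
      ≤ energyBefore e h (insert js (J.erase w)) (Function.update σS js (σ js)) t := by
  have hearly : ∀ i ∈ (insert js (J.erase w)).filter (Function.update σS js (σ js) · < t),
      i ∈ insert js G ∧ Function.update σS js (σ js) i = σ i := by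
    intro i hi
    obtain ⟨hiJ', hit⟩ := Finset.mem_filter.1 hi
    by_cases hij : i = js
    · subst hij
      simp
    rw [Function.update_of_ne hij] at hit ⊢
    have hiJ : i ∈ J := Finset.mem_of_mem_erase ((Finset.mem_insert.1 hiJ').resolve_left hij)
    have hiG : i ∈ G := by
      by_contra hiG
      exact absurd hit (not_lt.2 (hlate i hiJ hiG))
    exact ⟨Finset.mem_insert_of_mem hiG, hagree i hiG⟩
  rw [← energyBefore_filter (insert js (J.erase w))]
  exact energyBefore_le_of_subset he hh (fun i hi => (hearly i hi).1) (fun i hi => (hearly i hi).2)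
    t

lemma energyBefore_le_exchange_or (he : ∀ i, 0 ≤ e i) (hh : ∀ t, 0 ≤ h t) (hw : w ∈ J) {ts : ℕ}
    (hcheap : e js + h ts ≤ e w + h (σS w))
    (hfirst : σS w ≤ ts ∨ ∀ a ∈ J, a ∉ G → σS w ≤ σS a) (t : ℕ) :
    energyBefore e h J σS t
        ≤ energyBefore e h (insert js (J.erase w)) (Function.update σS js ts) t ∨
      t ≤ σS w ∧ ∀ a ∈ J, a ∉ G → σS w ≤ σS a := by
  by_cases hgain : σS w < t ∨ ¬ ts < t
  · left
    have hex := energyBefore_exchange he hh hw (σS := σS) (js := js) ts t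
    split_ifs at hex <;> first | omega | linarith [he w, hh (σS w)]
  · rw [not_or, not_lt, not_not] at hgain
    exact Or.inr ⟨hgain.1, hfirst.resolve_left (by omega)⟩

lemma le_energyBefore_exchange_self (he : ∀ i, 0 ≤ e i) (hh : ∀ t, 0 ≤ h t)
    (hS : IsFeasible n T r d e h J σS) (hG : IsFeasible n T r d e h (insert js G) σ)
    (hagree : ∀ u ∈ G, σS u = σ u) (hw : w ∈ J)
    (hcheap : e js + h (σ js) ≤ e w + h (σS w))
    (hfirst : σS w ≤ σ js ∨ ∀ a ∈ J, a ∉ G → σS w ≤ σS a) :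
    e js ≤ energyBefore e h (insert js (J.erase w)) (Function.update σS js (σ js)) (σ js) := by
  have hex := energyBefore_exchange he hh hw (σS := σS) (js := js) (σ js) (σ js)
  rcases lt_trichotomy (σS w) (σ js) with hlt | heq | hgt
  · rw [if_pos hlt, if_neg (lt_irrefl _)] at hex
    linarith [hS.energyBefore_nonneg hh (σ js), hh (σ js)]
  · rw [if_neg heq.not_lt, if_neg (lt_irrefl _)] at hex
    have hw_energy := (hS.2.2 w hw).2.2.2.2
    rw [heq] at hw_energy hcheap
    linarith
  · have hlate : ∀ a ∈ J, a ∉ G → σ js ≤ σS a := fun a ha haG =>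
      hgt.le.trans (hfirst.resolve_left hgt.not_ge a ha haG)
    exact (hG.2.2 js (Finset.mem_insert_self _ _)).2.2.2.2.trans
      (energyBefore_le_exchange_of_forall_le he hh hagree hlate)

lemma le_energyBefore_exchange_of_mem (he : ∀ i, 0 ≤ e i) (hh : ∀ t, 0 ≤ h t)
    (hS : IsFeasible n T r d e h J σS) (hG : IsFeasible n T r d e h (insert js G) σ)
    (hagree : ∀ u ∈ G, σS u = σ u) (hw : w ∈ J)
    (hcheap : e js + h (σ js) ≤ e w + h (σS w))
    (hfirst : σS w ≤ σ js ∨ ∀ a ∈ J, a ∉ G → σS w ≤ σS a) {i : ℕ} (hi : i ∈ J.erase w) :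
    e i ≤ energyBefore e h (insert js (J.erase w)) (Function.update σS js (σ js)) (σS i) := by
  obtain ⟨hiw, hiJ⟩ := Finset.mem_erase.1 hi
  rcases energyBefore_le_exchange_or he hh hw hcheap hfirst (σS i) with hle | ⟨hiw_le, hwfirst⟩
  · exact (hS.2.2 i hiJ).2.2.2.2.trans hle
  have hiG : i ∈ G := by
    by_contra hiG
    exact hiw (hS.2.1 hiJ hw (le_antisymm hiw_le (hwfirst i hiJ hiG)))
  have hlate : ∀ a ∈ J, a ∉ G → σS i ≤ σS a := fun a ha haG => hiw_le.trans (hwfirst a ha haG)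
  have hi_energy := (hG.2.2 i (Finset.mem_insert_of_mem hiG)).2.2.2.2
  rw [← hagree i hiG] at hi_energy
  exact hi_energy.trans (energyBefore_le_exchange_of_forall_le he hh hagree hlate)

lemma isFeasible_exchange (he : ∀ i, 0 ≤ e i) (hh : ∀ t, 0 ≤ h t)
    (hS : IsFeasible n T r d e h J σS) (hG : IsFeasible n T r d e h (insert js G) σ)
    (hagree : ∀ u ∈ G, σS u = σ u) (hw : w ∈ J) (hslot : ∀ k ∈ J, σS k = σ js → k = w)
    (hcheap : e js + h (σ js) ≤ e w + h (σS w))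
    (hfirst : σS w ≤ σ js ∨ ∀ a ∈ J, a ∉ G → σS w ≤ σS a) :
    IsFeasible n T r d e h (insert js (J.erase w)) (Function.update σS js (σ js)) := by
  have hother : ∀ i ∈ insert js (J.erase w), i ≠ js →
      i ∈ J.erase w ∧ Function.update σS js (σ js) i = σS i := fun i hi hij =>
    ⟨(Finset.mem_insert.1 hi).resolve_left hij, Function.update_of_ne hij _ _⟩
  have hnot_at : ∀ i ∈ J.erase w, σS i ≠ σ js := fun i hi hit =>
    Finset.ne_of_mem_erase hi (hslot i (Finset.mem_of_mem_erase hi) hit)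
  refine ⟨Finset.insert_subset (hG.1 (Finset.mem_insert_self _ _))
    ((Finset.erase_subset _ _).trans hS.1), fun i hi j hj hij => ?_, fun i hi => ?_⟩
  · by_cases hi' : i = js <;> by_cases hj' : j = js
    · rw [hi', hj']
    · obtain ⟨hjJ, hjσ⟩ := hother j hj hj'
      rw [hi', hjσ, Function.update_self] at hij
      exact absurd hij.symm (hnot_at j hjJ)
    · obtain ⟨hiJ, hiσ⟩ := hother i hi hi'
      rw [hj', hiσ, Function.update_self] at hij
      exact absurd hij (hnot_at i hiJ)
    · obtain ⟨hiJ, hiσ⟩ := hother i hi hi'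
      obtain ⟨hjJ, hjσ⟩ := hother j hj hj'
      rw [hiσ, hjσ] at hij
      exact hS.2.1 (Finset.mem_of_mem_erase hiJ) (Finset.mem_of_mem_erase hjJ) hij
  · by_cases hi' : i = js
    · subst hi'
      obtain ⟨h1, h2, h3, h4, -⟩ := hG.2.2 i (Finset.mem_insert_self _ _)
      rw [Function.update_self]
      exact ⟨h1, h2, h3, h4, le_energyBefore_exchange_self he hh hS hG hagree hw hcheap hfirst⟩
    · obtain ⟨hiJ, hiσ⟩ := hother i hi hi'
      obtain ⟨h1, h2, h3, h4, -⟩ := hS.2.2 i (Finset.mem_of_mem_erase hiJ)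
      rw [hiσ]
      exact ⟨h1, h2, h3, h4,
        le_energyBefore_exchange_of_mem he hh hS hG hagree hw hcheap hfirst hiJ⟩

lemma exists_exchange_partner (hS : IsFeasible n T r d e h J σS)
    (hG : IsFeasible n T r d e h (insert js G) σ) (hjs : js ∉ G) (hagree : ∀ u ∈ G, σS u = σ u)
    (hrest : ∃ a ∈ J, a ∉ G) :
    ∃ w ∈ J, w ∉ G ∧ (∀ k ∈ J, σS k = σ js → k = w) ∧
      (σS w ≤ σ js ∨ ∀ a ∈ J, a ∉ G → σS w ≤ σS a) := by
  by_cases hat : ∃ k ∈ J, σS k = σ js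
  · obtain ⟨k, hkJ, hk⟩ := hat
    refine ⟨k, hkJ, fun hkG => hjs ?_, fun k' hk'J hk' => hS.2.1 hk'J hkJ (hk'.trans hk.symm),
      Or.inl hk.le⟩
    have hk_js : k = js := hG.2.1 (Finset.mem_insert_of_mem hkG) (Finset.mem_insert_self _ _)
      ((hagree k hkG).symm.trans hk)
    exact hk_js ▸ hkG
  · obtain ⟨a, haJ, haG⟩ := hrest
    obtain ⟨w, hw, hwmin⟩ :=
      (J.filter (· ∉ G)).exists_min_image σS ⟨a, Finset.mem_filter.2 ⟨haJ, haG⟩⟩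
    obtain ⟨hwJ, hwG⟩ := Finset.mem_filter.1 hw
    exact ⟨w, hwJ, hwG, fun k hkJ hk => absurd ⟨k, hkJ, hk⟩ hat,
      Or.inr fun a haJ haG => hwmin a (Finset.mem_filter.2 ⟨haJ, haG⟩)⟩

theorem exists_exchange (he : ∀ i, 0 ≤ e i) (hh : ∀ t, 0 ≤ h t)
    (hS : IsFeasible n T r d e h J σS) (hG : IsFeasible n T r d e h (insert js G) σ)
    (hjs : js ∉ G) (hGJ : G ⊆ J) (hagree : ∀ u ∈ G, σS u = σ u)
    (hcheap : ∀ a ∈ J, a ∉ G → e js + h (σ js) ≤ e a + h (σS a)) :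
    ∃ (J' : Finset ℕ) (σ' : ℕ → ℕ), IsFeasible n T r d e h J' σ' ∧ J.card ≤ J'.card + 1 ∧
      insert js G ⊆ J' ∧ (∀ u ∈ insert js G, σ' u = σ u) ∧ J' \ insert js G ⊆ J \ G := by
  by_cases hrest : ∃ a ∈ J, a ∉ G
  · obtain ⟨w, hwJ, hwG, hslot, hfirst⟩ := exists_exchange_partner hS hG hjs hagree hrest
    refine ⟨insert js (J.erase w), Function.update σS js (σ js),
      isFeasible_exchange he hh hS hG hagree hwJ hslot (hcheap w hwJ hwG) hfirst, ?_,
      Finset.insert_subset_insert js fun u hu => Finset.mem_erase.2 ⟨?_, hGJ hu⟩,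
      fun u hu => ?_, fun u => ?_⟩
    · have := Finset.card_erase_add_one hwJ
      have := Finset.card_le_card (Finset.subset_insert js (J.erase w))
      omega
    · rintro rfl
      exact hwG hu
    · by_cases hu' : u = js
      · rw [hu', Function.update_self]
      · rw [Function.update_of_ne hu']
        exact hagree u ((Finset.mem_insert.1 hu).resolve_left hu')
    · simp only [Finset.mem_sdiff, Finset.mem_insert, Finset.mem_erase]
      tauto
  · push Not at hrest
    refine ⟨insert js G, σ, hG, ?_, subset_rfl, fun _ _ => rfl, by simp⟩
    have := Finset.card_le_card ((show J ⊆ G from hrest).trans (Finset.subset_insert js G))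
    omega

end Exchange

lemma image_Icc_one_add_one (g : ℕ → ℕ) (ℓ : ℕ) :
    (Finset.Icc 1 (ℓ + 1)).image g = insert (g (ℓ + 1)) ((Finset.Icc 1 ℓ).image g) := by
  rw [← Finset.insert_Icc_right_eq_Icc_add_one (by omega), Finset.image_insert]

namespace GreedySeq

variable {n T : ℕ} {r d : ℕ → ℕ} {e h : ℕ → ℤ} {x : ℕ} {g σ : ℕ → ℕ}

lemma card_image_Icc (hg : GreedySeq n T r d e h x g σ) {ℓ : ℕ} (hℓ : ℓ ≤ x) :
    ((Finset.Icc 1 ℓ).image g).card = ℓ := by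
  rw [Finset.card_image_of_injOn (hg.1.mono (Finset.coe_subset.2 (Finset.Icc_subset_Icc_right hℓ))),
    Nat.card_Icc, Nat.add_sub_cancel]

lemma apply_add_one_notMem (hg : GreedySeq n T r d e h x g σ) {ℓ : ℕ} (hℓ : ℓ + 1 ≤ x) :
    g (ℓ + 1) ∉ (Finset.Icc 1 ℓ).image g := by
  simp only [Finset.mem_image, Finset.mem_Icc, not_exists, not_and]
  intro i hi hgi
  have := hg.1 (by simp; omega) (by simp; omega) hgi
  omega

lemma isFeasible_insert (hg : GreedySeq n T r d e h x g σ) {ℓ : ℕ} (hℓ : ℓ + 1 ≤ x) :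
    IsFeasible n T r d e h (insert (g (ℓ + 1)) ((Finset.Icc 1 ℓ).image g)) σ := by
  rw [← image_Icc_one_add_one]
  exact (hg.2.1 (ℓ + 1) (by omega) hℓ).1

lemma le_of_isFeasible (he : ∀ i, 0 ≤ e i) (hh : ∀ t, 0 ≤ h t)
    (hg : GreedySeq n T r d e h x g σ) {ℓ : ℕ} (hℓ : ℓ + 1 ≤ x) {J : Finset ℕ} {σS : ℕ → ℕ}
    (hS : IsFeasible n T r d e h J σS) (hGJ : (Finset.Icc 1 ℓ).image g ⊆ J)
    (hagree : ∀ u ∈ (Finset.Icc 1 ℓ).image g, σS u = σ u) :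
    ∀ a ∈ J, a ∉ (Finset.Icc 1 ℓ).image g →
      e (g (ℓ + 1)) + h (σ (g (ℓ + 1))) ≤ e a + h (σS a) := by
  intro a haJ haG
  have hmin := (hg.2.1 (ℓ + 1) (by omega) hℓ).2
  simp only [Nat.add_sub_cancel] at hmin
  obtain ⟨h1, h2, -⟩ := hS.2.2 a haJ
  refine hmin a (σS a) (hS.1 haJ) haG (Finset.mem_Icc.2 ⟨h1, h2⟩) (fun hmem => ?_)
    (hS.mono he hh (Finset.insert_subset haJ hGJ) fun u hu => ?_)
  · obtain ⟨u, huG, hu⟩ := Finset.mem_image.1 hmem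
    rw [← hagree u huG] at hu
    exact haG (hS.2.1 (hGJ huG) haJ hu ▸ huG)
  · by_cases hua : u = a
    · rw [hua, Function.update_self]
    · rw [Function.update_of_ne hua]
      exact (hagree u ((Finset.mem_insert.1 hu).resolve_left hua)).symm

end GreedySeq

theorem greedy_invariant_general (n T : ℕ) (r d : ℕ → ℕ) (e h : ℕ → ℤ)
    (he : ∀ i, 0 ≤ e i) (hh : ∀ t, 0 ≤ h t)
    (JO : Finset ℕ) (σO : ℕ → ℕ) (m : ℕ)
    (hO : IsFeasible n T r d e h JO σO) (hOcard : JO.card = m)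
    (x : ℕ) (g σ : ℕ → ℕ) (hgreedy : GreedySeq n T r d e h x g σ) :
    ∀ ℓ ≤ x, ∃ (J' : Finset ℕ) (σ' : ℕ → ℕ),
      IsFeasible n T r d e h J' σ' ∧
      max ℓ (m - ℓ) ≤ J'.card ∧
      ((Finset.Icc 1 ℓ).image g ⊆ J' ∧
        ∀ i ∈ Finset.Icc 1 ℓ, σ' (g i) = σ (g i)) ∧
      J' \ (Finset.Icc 1 ℓ).image g ⊆ JO := by
  intro ℓ hℓ
  induction ℓ with
  | zero => exact ⟨JO, σO, hO, by simp [hOcard], by simp⟩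
  | succ ℓ ih =>
    obtain ⟨J, σS, hS, hcard, ⟨hGJ, hagree⟩, hJO⟩ := ih (by omega)
    replace hagree : ∀ u ∈ (Finset.Icc 1 ℓ).image g, σS u = σ u :=
      Finset.forall_mem_image.2 hagree
    obtain ⟨J', σ', hS', hcard', hGJ', hagree', hdiff⟩ :=
      exists_exchange he hh hS (hgreedy.isFeasible_insert hℓ) (hgreedy.apply_add_one_notMem hℓ)
        hGJ hagree (hgreedy.le_of_isFeasible he hh hℓ hS hGJ hagree)
    rw [← image_Icc_one_add_one] at hGJ' hagree' hdiff
    have hgreedy_card := Finset.card_le_card hGJ'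
    rw [hgreedy.card_image_Icc hℓ] at hgreedy_card
    exact ⟨J', σ', hS', by omega, ⟨hGJ', Finset.forall_mem_image.1 hagree'⟩, hdiff.trans hJO⟩

/-- Let `O = (JO, σO)` be a maximum-cardinality feasible
schedule with `|J(O)| = m` and let `(g, σ)` be a greedy sequence of length `x`.
Then after every iteration `ℓ ∈ {0,…,x}` there is a feasible schedule `(J', σ')`
with (i) `|J'| ≥ max {ℓ, m - ℓ}`, (ii) containing the first `ℓ` greedy jobs at
their greedy slots, and (iii) all of whose other jobs belong to `J(O)`. -/
theorem greedy_invariant (n T : ℕ) (r d : ℕ → ℕ) (e h : ℕ → ℤ)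
    (he : ∀ i, 0 ≤ e i) (hh : ∀ t, 0 ≤ h t)
    (JO : Finset ℕ) (σO : ℕ → ℕ) (m : ℕ)
    (hO : IsFeasible n T r d e h JO σO) (hOcard : JO.card = m)
    (hOmax : ∀ (J : Finset ℕ) (σ : ℕ → ℕ),
      IsFeasible n T r d e h J σ → J.card ≤ m)
    (x : ℕ) (g σ : ℕ → ℕ) (hgreedy : GreedySeq n T r d e h x g σ) :
    ∀ ℓ ≤ x, ∃ (J' : Finset ℕ) (σ' : ℕ → ℕ),
      IsFeasible n T r d e h J' σ' ∧
      max ℓ (m - ℓ) ≤ J'.card ∧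
      ((Finset.Icc 1 ℓ).image g ⊆ J' ∧
        ∀ i ∈ Finset.Icc 1 ℓ, σ' (g i) = σ (g i)) ∧
      J' \ (Finset.Icc 1 ℓ).image g ⊆ JO :=
  greedy_invariant_general n T r d e h he hh JO σO m hO hOcard x g σ hgreedy
end

section
/- Consider a weighted instance in which, for every job i, the schedule consisting only of job i (at some slot in {r_i,…,d_i}) is feasible. Let W_max = max_i w_i, let OPT = max over feasible schedules S of Σ_{i ∈ J(S)} w_i, and fix ε > 0. Define rounded weights w′_i = ⌊w_i · n / (ε · W_max)⌋ · (ε · W_max / n) for each i. Then: (i) for every feasible schedule S, Σ_{i ∈ J(S)} w′_i ≤ Σ_{i ∈ J(S)} w_i; and (ii) any feasible schedule S* maximizing Σ_{i ∈ J(S)} w′_i over feasible schedules satisfies Σ_{i ∈ J(S*)} w_i ≥ (1 − ε) · OPT. -/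
/-!
Rounding each weight down to a multiple of `K = ε·Wmax/n` loses less than `K` per job, so
an optimal schedule `J₀` keeps rounded weight at least `OPT - #J₀·K ≥ OPT - ε·Wmax`.
A schedule maximizing the rounded weight does at least as well, and its true weight is no
smaller than its rounded one. Finally `Wmax ≤ OPT`, since every single job is schedulable on
its own.
-/

open Finset

noncomputable def roundDown (K x : ℝ) : ℝ := ⌊x / K⌋ * K

theorem roundDown_le {K x : ℝ} (hK : 0 ≤ K) (hx : 0 ≤ x) : roundDown K x ≤ x := by
  rcases hK.eq_or_lt with rfl | hK
  · simpa [roundDown] using hx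
  · calc roundDown K x ≤ x / K * K := mul_le_mul_of_nonneg_right (Int.floor_le _) hK.le
      _ = x := div_mul_cancel₀ x hK.ne'

theorem sub_le_roundDown {K x : ℝ} (hK : 0 < K) : x - K ≤ roundDown K x :=
  calc x - K = (x / K - 1) * K := by field_simp
    _ ≤ roundDown K x := mul_le_mul_of_nonneg_right (Int.sub_one_lt_floor _).le hK.le

-- The mesh may degenerate to `0`, but only together with `x`.
theorem sub_le_roundDown_mul {c x M : ℝ} (hc : 0 < c) (hx : 0 ≤ x) (hxM : x ≤ M) :
    x - c * M ≤ roundDown (c * M) x := by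
  rcases (hx.trans hxM).eq_or_lt with rfl | hM
  · simp [le_antisymm hxM hx, roundDown]
  · exact sub_le_roundDown (mul_pos hc hM)

theorem card_mul_div_le {k n : ℕ} {a : ℝ} (hkn : k ≤ n) (ha : 0 ≤ a) :
    (k : ℝ) * (a / n) ≤ a := by
  rcases Nat.eq_zero_or_pos n with rfl | hn
  · simpa using ha
  · rw [mul_div_left_comm]
    exact mul_le_of_le_one_right ha ((div_le_one (by positivity)).mpr (by exact_mod_cast hkn))

theorem sum_sub_card_mul_le_sum {ι : Type*} {J₀ J' : Finset ι} {w w' : ι → ℝ} {K : ℝ}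
    (hlow : ∀ i ∈ J₀, w i - K ≤ w' i) (hup : ∀ i ∈ J', w' i ≤ w i)
    (hmax : ∑ i ∈ J₀, w' i ≤ ∑ i ∈ J', w' i) :
    ∑ i ∈ J₀, w i - #J₀ * K ≤ ∑ i ∈ J', w i :=
  calc ∑ i ∈ J₀, w i - #J₀ * K = ∑ i ∈ J₀, (w i - K) := by
        rw [sum_sub_distrib, sum_const, nsmul_eq_mul]
    _ ≤ ∑ i ∈ J₀, w' i := sum_le_sum hlow
    _ ≤ ∑ i ∈ J', w' i := hmax
    _ ≤ ∑ i ∈ J', w i := sum_le_sum hup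

theorem fptas_rounding_general (n T : ℕ) (r d : ℕ → ℕ) (e h : ℕ → ℤ) (w : ℕ → ℕ)
    (hsingle : ∀ i ∈ Finset.Icc 1 n,
      ∃ σ : ℕ → ℕ, IsFeasible n T r d e h {i} σ)
    (Wmax : ℕ) (hWmax : Wmax = (Finset.Icc 1 n).sup w)
    (OPT : ℕ)
    (hOPT : IsGreatest {v : ℕ | ∃ (J : Finset ℕ) (σ : ℕ → ℕ),
      IsFeasible n T r d e h J σ ∧ v = ∑ i ∈ J, w i} OPT)
    (ε : ℝ) (hε : 0 < ε)
    (w' : ℕ → ℝ)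
    (hw' : ∀ i, w' i = (⌊(w i : ℝ) * n / (ε * Wmax)⌋ : ℝ) * (ε * Wmax / n)) :
    (∀ (J : Finset ℕ) (σ : ℕ → ℕ), IsFeasible n T r d e h J σ →
      ∑ i ∈ J, w' i ≤ ∑ i ∈ J, (w i : ℝ)) ∧
    (∀ (J' : Finset ℕ) (σ' : ℕ → ℕ), IsFeasible n T r d e h J' σ' →
      (∀ (J : Finset ℕ) (σ : ℕ → ℕ), IsFeasible n T r d e h J σ →
        ∑ i ∈ J, w' i ≤ ∑ i ∈ J', w' i) →
      (1 - ε) * (OPT : ℝ) ≤ ∑ i ∈ J', (w i : ℝ)) := by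
  have hround : ∀ i, w' i = roundDown (ε * Wmax / n) (w i) := fun i => by
    rw [hw', roundDown, div_div_eq_mul_div]
  have hup : ∀ i, w' i ≤ w i := fun i =>
    (hround i).trans_le (roundDown_le (by positivity) (Nat.cast_nonneg _))
  refine ⟨fun J _ _ => sum_le_sum fun i _ => hup i, fun J' _ _ hmax => ?_⟩
  obtain ⟨⟨J₀, σ₀, hfeas₀, rfl⟩, hOPT_ub⟩ := hOPT
  have hWmax_le : (Wmax : ℝ) ≤ ∑ i ∈ J₀, (w i : ℝ) := by
    exact_mod_cast hWmax ▸ Finset.sup_le fun i hi =>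
      (hsingle i hi).elim fun σ hσ => hOPT_ub ⟨{i}, σ, hσ, by simp⟩
  have hlow : ∀ i ∈ J₀, (w i : ℝ) - ε * Wmax / n ≤ w' i := fun i hi => by
    have hi : i ∈ Icc 1 n := hfeas₀.1 hi
    have hn : (0 : ℝ) < n := by exact_mod_cast (mem_Icc.mp hi).1.trans (mem_Icc.mp hi).2
    rw [hround, mul_div_right_comm]
    exact sub_le_roundDown_mul (div_pos hε hn) (Nat.cast_nonneg _)
      (by exact_mod_cast hWmax ▸ le_sup hi)
  have hcard : #J₀ * (ε * Wmax / n) ≤ ε * Wmax :=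
    card_mul_div_le ((card_le_card hfeas₀.1).trans (by simp)) (by positivity)
  calc (1 - ε) * ((∑ i ∈ J₀, w i : ℕ) : ℝ)
        ≤ ∑ i ∈ J₀, (w i : ℝ) - ε * Wmax := by
        push_cast; linarith [mul_le_mul_of_nonneg_left hWmax_le hε.le]
    _ ≤ ∑ i ∈ J₀, (w i : ℝ) - #J₀ * (ε * Wmax / n) := by linarith
    _ ≤ ∑ i ∈ J', (w i : ℝ) :=
        sum_sub_card_mul_le_sum hlow (fun i _ => hup i) (hmax J₀ σ₀ hfeas₀)

/-- Rounding the weights down to multiples of `ε·Wmax/n` as in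
the FPTAS: (i) the rounded weight of any feasible schedule is at most its true
weight, and (ii) any feasible schedule maximizing the rounded weight has true
weight at least `(1 - ε) · OPT`. -/
theorem fptas_rounding (n T : ℕ) (r d : ℕ → ℕ) (e h : ℕ → ℤ) (w : ℕ → ℕ)
    (hn : 1 ≤ n)
    (he : ∀ i, 0 ≤ e i) (hh : ∀ t, 0 ≤ h t) (hw : ∀ i, 1 ≤ w i)
    (hsingle : ∀ i ∈ Finset.Icc 1 n,
      ∃ σ : ℕ → ℕ, IsFeasible n T r d e h {i} σ)
    (Wmax : ℕ) (hWmax : Wmax = (Finset.Icc 1 n).sup w)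
    (OPT : ℕ)
    (hOPT : IsGreatest {v : ℕ | ∃ (J : Finset ℕ) (σ : ℕ → ℕ),
      IsFeasible n T r d e h J σ ∧ v = ∑ i ∈ J, w i} OPT)
    (ε : ℝ) (hε : 0 < ε)
    (w' : ℕ → ℝ)
    (hw' : ∀ i, w' i = (⌊(w i : ℝ) * n / (ε * Wmax)⌋ : ℝ) * (ε * Wmax / n)) :
    (∀ (J : Finset ℕ) (σ : ℕ → ℕ), IsFeasible n T r d e h J σ →
      ∑ i ∈ J, w' i ≤ ∑ i ∈ J, (w i : ℝ)) ∧
    (∀ (J' : Finset ℕ) (σ' : ℕ → ℕ), IsFeasible n T r d e h J' σ' →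
      (∀ (J : Finset ℕ) (σ : ℕ → ℕ), IsFeasible n T r d e h J σ →
        ∑ i ∈ J, w' i ≤ ∑ i ∈ J', w' i) →
      (1 - ε) * (OPT : ℝ) ≤ ∑ i ∈ J', (w i : ℝ)) :=
  fptas_rounding_general n T r d e h w hsingle Wmax hWmax OPT hOPT ε hε w' hw'
end
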